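/- Suppose the linear functional ⟨·⟩ is reflection positive for reflections through edges and the two-point function G_L is torus symmetric. Then for any z ∈ T_L and any i ∈ {1,…,d} such that the coordinate z·e_i is even and nonzero, one has G_L(o, z) ≤ ½ ( G_L(o, (z·e_i − 1)·e_i) + G_L(o, (z·e_i + 1)·e_i) ). -/

import Mathlib

/-!
Since `z·e i` is even and nonzero, there is a reflection `θ` through edges, perpendicular to
`e i`, with `θ o = (z·e i - 1) e i` and such that `o` and `z' = θ z` (whose `i`-th coordinate is
`-1`) lie in the same half `T_L^+`. Put `A = F²_o ∏_{T_L^+ ∖ {o}} F¹` and `B` likewise with `z'`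
in place of `o`. Reflection positivity applied to `A - B` gives
`⟨A θB⟩ ≤ (⟨A θA⟩ + ⟨B θB⟩) / 2`, and since `θ` exchanges the two halves these three numbers are
`G_L(o, z)`, `G_L(o, θ o)` and `G_L(z', z)`. Torus symmetry turns the last one into
`G_L(o, (z·e i + 1) e i)`.
-/

namespace RPPaper

/-- The torus `T_L = (ℤ/Lℤ)^d`. -/
abbrev Torus (d L : ℕ) : Type := Fin d → ZMod L

/-- The unit vector `e i`. -/
def unitVec {d L : ℕ} (i : Fin d) : Torus d L := fun k => if k = i then 1 else 0

/-- The point `a • e i` on the torus. -/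
def axis {d L : ℕ} (i : Fin d) (a : ZMod L) : Torus d L := fun k => if k = i then a else 0

/-- The integer representative of `a : ZMod L` in the interval `(-L/2, L/2]`. -/
def coordRep (L : ℕ) [NeZero L] (a : ZMod L) : ℤ :=
  if (a.val : ℤ) ≤ (L : ℤ) / 2 then (a.val : ℤ) else (a.val : ℤ) - (L : ℤ)

/-- The reflection of the torus in the hyperplane `{z : z·e i = t/2}` (here `t = 2m`);
it is a reflection through edges if `t` is odd, and through vertices if `t` is even. -/
def reflect {d L : ℕ} (i : Fin d) (t : ℕ) (x : Torus d L) : Torus d L :=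
  Function.update x i ((t : ZMod L) - x i)

/-- The positive half `T_L^+` of the torus associated to the reflection in the hyperplane
`{z : z·e i = t/2}`. -/
def posHalf (d L : ℕ) [NeZero L] (i : Fin d) (t : ℕ) : Finset (Torus d L) :=
  if t % 2 = 1 then Finset.univ.filter (fun x => (x i - (((t + 1) / 2 : ℕ) : ZMod L)).val < L / 2)
  else Finset.univ.filter (fun x => (x i - ((t / 2 : ℕ) : ZMod L)).val ≤ L / 2)

/-- The negative half `T_L^- = θ(T_L^+)`. -/
def negHalf (d L : ℕ) [NeZero L] (i : Fin d) (t : ℕ) : Finset (Torus d L) :=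
  (posHalf d L i t).image (reflect i t)

/-- The state space `S = ∏_{x ∈ T_L} Σ_x` (all local state spaces equal to `Sig`). -/
abbrev MState (d L : ℕ) (Sig : Type*) : Type _ := Torus d L → Sig

/-- `A : S → ℝ` has domain `D` if it depends only on the local states in `D`. -/
def HasDomain {d L : ℕ} {Sig : Type*} (A : MState d L Sig → ℝ) (D : Set (Torus d L)) : Prop :=
  ∀ w₁ w₂ : MState d L Sig, (∀ x ∈ D, w₁ x = w₂ x) → A w₁ = A w₂

/-- The action `θA (w) = A (θ w)`, where `(θ w) x = w (θ x)`, of the reflection on functions. -/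
def reflectFun {d L : ℕ} {Sig : Type*} (i : Fin d) (t : ℕ) (A : MState d L Sig → ℝ) :
    MState d L Sig → ℝ := fun w => A (fun x => w (reflect i t x))

/-- `⟨·⟩` is reflection positive with respect to the reflection in the hyperplane
`{z : z·e i = t/2}`: for all `A, B ∈ A_L^+` (members of the algebra with domain `T_L^+`),
`⟨A·θB⟩ = ⟨B·θA⟩` and `⟨A·θA⟩ ≥ 0`. -/
def IsRP {d L : ℕ} {Sig : Type*} [NeZero L] (AL : Subalgebra ℝ (MState d L Sig → ℝ))
    (phi : (MState d L Sig → ℝ) →ₗ[ℝ] ℝ) (i : Fin d) (t : ℕ) : Prop :=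
  ∀ A B : MState d L Sig → ℝ, A ∈ AL → B ∈ AL →
    HasDomain A ↑(posHalf d L i t) → HasDomain B ↑(posHalf d L i t) →
    phi (A * reflectFun i t B) = phi (B * reflectFun i t A) ∧ 0 ≤ phi (A * reflectFun i t A)

/-- Reflection positivity for all reflections through edges. -/
def RPEdges {d L : ℕ} {Sig : Type*} [NeZero L] (AL : Subalgebra ℝ (MState d L Sig → ℝ))
    (phi : (MState d L Sig → ℝ) →ₗ[ℝ] ℝ) : Prop :=
  ∀ (i : Fin d) (t : ℕ), t < 2 * L → t % 2 = 1 → IsRP AL phi i t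

/-- Reflection positivity for all reflections through vertices. -/
def RPVertices {d L : ℕ} {Sig : Type*} [NeZero L] (AL : Subalgebra ℝ (MState d L Sig → ℝ))
    (phi : (MState d L Sig → ℝ) →ₗ[ℝ] ℝ) : Prop :=
  ∀ (i : Fin d) (t : ℕ), t < 2 * L → t % 2 = 0 → IsRP AL phi i t

/-- The single-site function `F^j_x`, obtained from a function `f : Sig → ℝ` of the local
state at the origin by the (path-independent) sequence of reflections sending `o` to `x`. -/
def site {d L : ℕ} {Sig : Type*} (f : Sig → ℝ) (x : Torus d L) : MState d L Sig → ℝ :=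
  fun w => f (w x)

/-- The two-point function `G_L(x,y) = ⟨F²_x F²_y ∏_{z ≠ x,y} F¹_z⟩`. -/
noncomputable def twoPoint {d L : ℕ} {Sig : Type*} [NeZero L]
    (phi : (MState d L Sig → ℝ) →ₗ[ℝ] ℝ) (f1 f2 : Sig → ℝ) (x y : Torus d L) : ℝ :=
  phi (fun w => f2 (w x) * f2 (w y) * ∏ z ∈ (Finset.univ.erase x).erase y, f1 (w z))

/-- Torus symmetry: `⟨∏_{x∈A}F¹_x ∏_{x∈B}F²_x⟩ = ⟨∏_{x∈A+z}F¹_x ∏_{x∈B+z}F²_x⟩`. -/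
def TorusSymmetric {d L : ℕ} {Sig : Type*} [NeZero L]
    (phi : (MState d L Sig → ℝ) →ₗ[ℝ] ℝ) (f1 f2 : Sig → ℝ) : Prop :=
  ∀ (A B : Finset (Torus d L)) (z : Torus d L),
    phi (fun w => (∏ x ∈ A, f1 (w x)) * ∏ x ∈ B, f2 (w x)) =
      phi (fun w => (∏ x ∈ A, f1 (w (x + z))) * ∏ x ∈ B, f2 (w (x + z)))

section Geometry

variable {d L : ℕ}

lemma reflect_apply_self (i : Fin d) (t : ℕ) (x : Torus d L) :
    reflect i t x i = (t : ZMod L) - x i :=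
  Function.update_self i _ x

lemma reflect_apply_of_ne {i k : Fin d} (hk : k ≠ i) (t : ℕ) (x : Torus d L) :
    reflect i t x k = x k :=
  Function.update_of_ne hk _ x

lemma reflect_involutive (i : Fin d) (t : ℕ) :
    Function.Involutive (reflect i t : Torus d L → Torus d L) := by
  intro x
  funext k
  by_cases hk : k = i
  · subst hk
    rw [reflect_apply_self, reflect_apply_self, sub_sub_cancel]
  · rw [reflect_apply_of_ne hk, reflect_apply_of_ne hk]

lemma reflect_zero (i : Fin d) (t : ℕ) : reflect i t (0 : Torus d L) = axis i t := by
  funext k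
  by_cases hk : k = i
  · subst hk
    simp [reflect_apply_self, axis]
  · simp [reflect_apply_of_ne hk, axis, hk]

lemma sub_reflect (i : Fin d) (t : ℕ) (x : Torus d L) :
    x - reflect i t x = axis i (2 * x i - (t : ZMod L)) := by
  funext k
  by_cases hk : k = i
  · subst hk
    simp only [Pi.sub_apply, reflect_apply_self, axis, if_pos]
    ring
  · simp [reflect_apply_of_ne hk, axis, hk]

variable [NeZero L]

lemma mem_posHalf_of_odd {i : Fin d} {t : ℕ} (ht : t % 2 = 1) (x : Torus d L) :
    x ∈ posHalf d L i t ↔ (x i - (((t + 1) / 2 : ℕ) : ZMod L)).val < L / 2 := by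
  simp [posHalf, ht]

lemma val_neg_add_one (y : ZMod L) : (-(y + 1)).val = L - 1 - y.val := by
  have hy : y.val < L := ZMod.val_lt y
  have hsum : (y + 1) + ((L - 1 - y.val : ℕ) : ZMod L) = 0 := by
    have h : ((y.val + 1 + (L - 1 - y.val) : ℕ) : ZMod L) = 0 := by
      rw [show y.val + 1 + (L - 1 - y.val) = L by omega, ZMod.natCast_self]
    rwa [Nat.cast_add, Nat.cast_add, ZMod.natCast_zmod_val, Nat.cast_one] at h
  rw [neg_eq_of_add_eq_zero_right hsum]
  exact ZMod.val_cast_of_lt (by omega)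

/-- Both hyperplanes fixed by the reflection, `{x i = t/2}` and `{x i = t/2 + L/2}`, pass through
edges, so no site is fixed and the two halves are exchanged. -/
lemma reflect_mem_posHalf_iff (hL : Even L) {i : Fin d} {t : ℕ} (ht : t % 2 = 1)
    (x : Torus d L) : reflect i t x ∈ posHalf d L i t ↔ x ∉ posHalf d L i t := by
  rw [mem_posHalf_of_odd ht, mem_posHalf_of_odd ht, reflect_apply_self]
  set c : ZMod L := (((t + 1) / 2 : ℕ) : ZMod L)
  have htc : (t : ZMod L) + 1 = c + c := by
    rw [← Nat.cast_add, ← Nat.cast_one, ← Nat.cast_add]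
    congr 1
    omega
  rw [show (t : ZMod L) - x i - c = -((x i - c) + 1) by linear_combination htc, val_neg_add_one]
  have := ZMod.val_lt (x i - c)
  obtain ⟨n, hn⟩ := hL
  omega

lemma image_reflect_posHalf (hL : Even L) {i : Fin d} {t : ℕ} (ht : t % 2 = 1) :
    (posHalf d L i t).image (reflect i t) = (posHalf d L i t)ᶜ := by
  ext y
  rw [Finset.mem_image, Finset.mem_compl]
  constructor
  · rintro ⟨x, hx, rfl⟩
    rwa [← reflect_mem_posHalf_iff hL ht, reflect_involutive]
  · intro hy
    exact ⟨reflect i t y, (reflect_mem_posHalf_iff hL ht y).mpr hy, reflect_involutive i t y⟩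

end Geometry

section Arithmetic

variable {L : ℕ}

lemma val_sub_natCast_lt_half (hL : Even L) {k : ℕ} (hk : L / 2 < k) (hkL : k < L) {y : ZMod L}
    (hy : y = 0 ∨ y = -1) : (y - k).val < L / 2 := by
  obtain ⟨j, hj, rfl⟩ : ∃ j : ℕ, j ≤ 1 ∧ y = -(j : ZMod L) := by
    rcases hy with rfl | rfl
    exacts [⟨0, by simp⟩, ⟨1, by simp⟩]
  have hsum : ((L - k - j : ℕ) : ZMod L) + (j + k) = 0 := by
    rw [← Nat.cast_add, ← Nat.cast_add, show L - k - j + (j + k) = L by omega, ZMod.natCast_self]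
  rw [show -(j : ZMod L) - k = ((L - k - j : ℕ) : ZMod L) by linear_combination -hsum,
    ZMod.val_cast_of_lt (by omega)]
  obtain ⟨n, hn⟩ := hL
  omega

variable [NeZero L]

lemma coordRep_eq_valMinAbs (a : ZMod L) : coordRep L a = a.valMinAbs := by
  rw [coordRep, ZMod.valMinAbs_def_pos]
  split_ifs <;> omega

/-- The even representative `2m` of `a` has `|2m| ≤ L/2`, so `a = 2k` with `k = L/2 + m` if
`m > 0` and `k = L + m` if `m < 0`. -/
lemma exists_two_mul_eq_of_even_valMinAbs (hL : Even L) (a : ZMod L) (heven : Even a.valMinAbs)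
    (hne : a.valMinAbs ≠ 0) : ∃ k : ℕ, L / 2 < k ∧ k < L ∧ 2 * (k : ZMod L) = a := by
  obtain ⟨n, hn⟩ := hL
  obtain ⟨hlow, hup⟩ := a.valMinAbs_mem_Ioc
  have hL0 : (n : ZMod L) + n = 0 := by rw [← Nat.cast_add, ← hn, ZMod.natCast_self]
  rw [← a.coe_valMinAbs]
  obtain ⟨j, hj | hj⟩ := Int.eq_nat_or_neg a.valMinAbs <;> rw [hj] at heven hne hlow hup ⊢
  · obtain ⟨m, rfl⟩ : Even j := by exact_mod_cast heven
    refine ⟨n + m, by omega, by omega, ?_⟩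
    push_cast
    linear_combination hL0
  · obtain ⟨m, rfl⟩ : Even j := by simpa using heven
    refine ⟨2 * n - m, by omega, by omega, ?_⟩
    rw [Nat.cast_sub (by omega)]
    push_cast
    linear_combination 2 * hL0

end Arithmetic

section ReflectionPositivity

variable {d L : ℕ} {Sig : Type*}

def markedProduct (f1 f2 : Sig → ℝ) (P : Finset (Torus d L)) (u : Torus d L) :
    MState d L Sig → ℝ :=
  fun w => f2 (w u) * ∏ x ∈ P.erase u, f1 (w x)

lemma markedProduct_mem {AL : Subalgebra ℝ (MState d L Sig → ℝ)} {f1 f2 : Sig → ℝ}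
    (hF1 : ∀ x : Torus d L, site f1 x ∈ AL) (hF2 : ∀ x : Torus d L, site f2 x ∈ AL)
    (P : Finset (Torus d L)) (u : Torus d L) : markedProduct f1 f2 P u ∈ AL := by
  have h : markedProduct f1 f2 P u = site f2 u * ∏ x ∈ P.erase u, site f1 x := by
    funext w
    simp only [markedProduct, site, Pi.mul_apply, Finset.prod_apply]
  rw [h]
  exact mul_mem (hF2 u) (prod_mem fun x _ => hF1 x)

lemma hasDomain_markedProduct (f1 f2 : Sig → ℝ) {P : Finset (Torus d L)} {u : Torus d L}
    (hu : u ∈ P) : HasDomain (markedProduct f1 f2 P u) ↑P := by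
  intro w₁ w₂ h
  simp only [markedProduct]
  rw [h u hu, Finset.prod_congr rfl fun x hx => by rw [h x (Finset.mem_of_mem_erase hx)]]

lemma HasDomain.sub {A B : MState d L Sig → ℝ} {D : Set (Torus d L)}
    (hA : HasDomain A D) (hB : HasDomain B D) : HasDomain (A - B) D := by
  intro w₁ w₂ h
  simp only [Pi.sub_apply, hA w₁ w₂ h, hB w₁ w₂ h]

variable [NeZero L]

lemma markedProduct_mul_reflectFun (hL : Even L) {i : Fin d} {t : ℕ} (ht : t % 2 = 1)
    (f1 f2 : Sig → ℝ) {u v : Torus d L} (hu : u ∈ posHalf d L i t) (hv : v ∈ posHalf d L i t) :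
    markedProduct f1 f2 (posHalf d L i t) u *
        reflectFun i t (markedProduct f1 f2 (posHalf d L i t) v) =
      fun w => f2 (w u) * f2 (w (reflect i t v)) *
        ∏ x ∈ (Finset.univ.erase u).erase (reflect i t v), f1 (w x) := by
  set P := posHalf d L i t
  have hθv : reflect i t v ∉ P := (reflect_mem_posHalf_iff hL ht _).not_left.mpr hv
  have hP : ((Finset.univ.erase u).erase (reflect i t v)).filter (· ∈ P) = P.erase u := by
    ext x
    simp only [Finset.mem_filter, Finset.mem_erase, Finset.mem_univ]
    constructor
    · rintro ⟨⟨-, hxu, -⟩, hx⟩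
      exact ⟨hxu, hx⟩
    · rintro ⟨hxu, hx⟩
      exact ⟨⟨fun h => hθv (h ▸ hx), hxu, trivial⟩, hx⟩
  have hPc : ((Finset.univ.erase u).erase (reflect i t v)).filter (· ∉ P) =
      (P.erase v).image (reflect i t) := by
    rw [Finset.image_erase (reflect_involutive i t).injective, image_reflect_posHalf hL ht]
    ext x
    simp only [Finset.mem_filter, Finset.mem_erase, Finset.mem_univ, Finset.mem_compl]
    constructor
    · rintro ⟨⟨hxv, -, -⟩, hx⟩
      exact ⟨hxv, hx⟩
    · rintro ⟨hxv, hx⟩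
      exact ⟨⟨hxv, fun h => hx (h ▸ hu), trivial⟩, hx⟩
  funext w
  simp only [Pi.mul_apply, markedProduct, reflectFun]
  rw [← Finset.prod_filter_mul_prod_filter_not ((Finset.univ.erase u).erase (reflect i t v))
    (· ∈ P), hP, hPc, Finset.prod_image fun x _ y _ h => (reflect_involutive i t).injective h]
  ring

lemma IsRP.apply_mul_reflectFun_le {AL : Subalgebra ℝ (MState d L Sig → ℝ)}
    {phi : (MState d L Sig → ℝ) →ₗ[ℝ] ℝ} {i : Fin d} {t : ℕ}
    (hRP : IsRP AL phi i t) {A B : MState d L Sig → ℝ} (hA : A ∈ AL) (hB : B ∈ AL)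
    (hdA : HasDomain A ↑(posHalf d L i t)) (hdB : HasDomain B ↑(posHalf d L i t)) :
    phi (A * reflectFun i t B) ≤
      (phi (A * reflectFun i t A) + phi (B * reflectFun i t B)) / 2 := by
  obtain ⟨hsymm, -⟩ := hRP A B hA hB hdA hdB
  obtain ⟨-, hpos⟩ := hRP (A - B) (A - B) (sub_mem hA hB) (sub_mem hA hB)
    (hdA.sub hdB) (hdA.sub hdB)
  have hexp : (A - B) * reflectFun i t (A - B) =
      A * reflectFun i t A - A * reflectFun i t B - B * reflectFun i t A +
        B * reflectFun i t B := by
    change (A - B) * (reflectFun i t A - reflectFun i t B) = _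
    ring
  rw [hexp, map_add, map_sub, map_sub, hsymm] at hpos
  linarith

lemma twoPoint_reflect_le_of_isRP (hL : Even L) {AL : Subalgebra ℝ (MState d L Sig → ℝ)}
    {phi : (MState d L Sig → ℝ) →ₗ[ℝ] ℝ} {f1 f2 : Sig → ℝ}
    (hF1 : ∀ x : Torus d L, site f1 x ∈ AL) (hF2 : ∀ x : Torus d L, site f2 x ∈ AL)
    {i : Fin d} {t : ℕ} (ht : t % 2 = 1) (hRP : IsRP AL phi i t)
    {u v : Torus d L} (hu : u ∈ posHalf d L i t) (hv : v ∈ posHalf d L i t) :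
    twoPoint phi f1 f2 u (reflect i t v) ≤
      (twoPoint phi f1 f2 u (reflect i t u) + twoPoint phi f1 f2 v (reflect i t v)) / 2 := by
  have h := hRP.apply_mul_reflectFun_le (markedProduct_mem hF1 hF2 _ u)
    (markedProduct_mem hF1 hF2 _ v) (hasDomain_markedProduct f1 f2 hu)
    (hasDomain_markedProduct f1 f2 hv)
  rwa [markedProduct_mul_reflectFun hL ht f1 f2 hu hv,
    markedProduct_mul_reflectFun hL ht f1 f2 hu hu,
    markedProduct_mul_reflectFun hL ht f1 f2 hv hv] at h

lemma twoPoint_add_add {phi : (MState d L Sig → ℝ) →ₗ[ℝ] ℝ} {f1 f2 : Sig → ℝ}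
    (hsym : TorusSymmetric phi f1 f2) {x y : Torus d L} (hxy : x ≠ y) (v : Torus d L) :
    twoPoint phi f1 f2 (x + v) (y + v) = twoPoint phi f1 f2 x y := by
  have hinj : Function.Injective (· + v : Torus d L → Torus d L) := add_left_injective v
  have himg : ((Finset.univ.erase x).erase y).image (· + v) =
      (Finset.univ.erase (x + v)).erase (y + v) := by
    rw [Finset.image_erase hinj, Finset.image_erase hinj, Finset.image_univ_of_surjective
      (add_right_surjective v)]
  have hprod (w : MState d L Sig) : ∏ p ∈ (Finset.univ.erase x).erase y, f1 (w (p + v)) =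
      ∏ p ∈ (Finset.univ.erase (x + v)).erase (y + v), f1 (w p) := by
    rw [← himg, Finset.prod_image fun a _ b _ hab => hinj hab]
  have h := hsym ((Finset.univ.erase x).erase y) {x, y} v
  simp only [Finset.prod_pair hxy, hprod] at h
  simp only [twoPoint, mul_comm (f2 _ * f2 _)]
  exact h.symm

end ReflectionPositivity

theorem statement1_general {d L : ℕ} [NeZero L] (hL : Even L) {Sig : Type*}
    (AL : Subalgebra ℝ (MState d L Sig → ℝ))
    (phi : (MState d L Sig → ℝ) →ₗ[ℝ] ℝ)
    (f1 f2 : Sig → ℝ)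
    (hF1 : ∀ x : Torus d L, site f1 x ∈ AL) (hF2 : ∀ x : Torus d L, site f2 x ∈ AL)
    (hRP : RPEdges AL phi) (hsym : TorusSymmetric phi f1 f2)
    (z : Torus d L) (i : Fin d) (heven : Even (coordRep L (z i))) (hne : coordRep L (z i) ≠ 0) :
    twoPoint phi f1 f2 0 z ≤
      (twoPoint phi f1 f2 0 (axis i (z i - 1)) + twoPoint phi f1 f2 0 (axis i (z i + 1))) / 2 := by
  rw [coordRep_eq_valMinAbs] at heven hne
  obtain ⟨k, hk, hkL, hkz⟩ := exists_two_mul_eq_of_even_valMinAbs hL (z i) heven hne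
  set t := 2 * k - 1
  have ht : t % 2 = 1 := by omega
  have htk : (t + 1) / 2 = k := by omega
  have htz : (t : ZMod L) = z i - 1 := by
    rw [Nat.cast_sub (by omega), ← hkz]
    push_cast
    ring
  set z' := reflect i t z with hz'_def
  have hz'i : z' i = -1 := by
    rw [hz'_def, reflect_apply_self, htz]
    ring
  have hmem : ∀ x : Torus d L, (x i = 0 ∨ x i = -1) → x ∈ posHalf d L i t := fun x hx =>
    (mem_posHalf_of_odd ht x).mpr (htk ▸ val_sub_natCast_lt_half hL hk hkL hx)
  have h0 := hmem 0 (Or.inl rfl)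
  have hz' := hmem z' (Or.inr hz'i)
  have hz'z : z' ≠ z := fun h => (reflect_mem_posHalf_iff hL ht z).mp hz' (h ▸ hz')
  have hzz' : z - z' = axis i (z i + 1) := by
    rw [hz'_def, sub_reflect, htz]
    congr 1
    ring
  have hRS := twoPoint_reflect_le_of_isRP hL hF1 hF2 ht (hRP i t (by omega) ht) h0 hz'
  rwa [reflect_involutive, reflect_zero, htz, ← twoPoint_add_add hsym hz'z (-z'), add_neg_cancel,
    ← sub_eq_add_neg, hzz'] at hRS

/-- If `⟨·⟩` is reflection positive for reflections through edges and the two-point function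
is torus symmetric, then for `z·e i` even and nonzero,
`G_L(o, z) ≤ ½(G_L(o, (z·e i − 1) e i) + G_L(o, (z·e i + 1) e i))`. -/
theorem statement1 {d L : ℕ} [NeZero L] (hd : 2 ≤ d) (hL : Even L) {Sig : Type*}
    (AL : Subalgebra ℝ (MState d L Sig → ℝ)) (hfin : FiniteDimensional ℝ AL)
    (phi : (MState d L Sig → ℝ) →ₗ[ℝ] ℝ) (hone : phi 1 = 1)
    (f1 f2 : Sig → ℝ)
    (hF1 : ∀ x : Torus d L, site f1 x ∈ AL) (hF2 : ∀ x : Torus d L, site f2 x ∈ AL)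
    (hRP : RPEdges AL phi) (hsym : TorusSymmetric phi f1 f2)
    (z : Torus d L) (i : Fin d) (heven : Even (coordRep L (z i))) (hne : coordRep L (z i) ≠ 0) :
    twoPoint phi f1 f2 0 z ≤
      (twoPoint phi f1 f2 0 (axis i (z i - 1)) + twoPoint phi f1 f2 0 (axis i (z i + 1))) / 2 :=
  statement1_general hL AL phi f1 f2 hF1 hF2 hRP hsym z i heven hne

end RPPaper
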